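/- arXiv:1907.00923 — 2 statements merged into one kernel-verified Lean document; each statement's English description precedes it below -/
import Mathlib

section
/- Let Q : ℂ → ℝ ∪ {+∞} be lower semicontinuous and satisfy liminf_{|ζ|→∞} Q(ζ)/(2 log|ζ|) > 1. Then the function ζ ↦ Q(ζ)·e^{−Q(ζ)} (defined to be 0 where Q(ζ) = +∞) is integrable on ℂ with respect to dA; that is, ∫_ℂ Q e^{−Q} dA < ∞. -/
open MeasureTheory Filter Topology
open scoped ENNReal NNReal Real

noncomputable section

/-- Lebesgue measure on `ℂ` divided by `π`. -/
def dA : Measure ℂ := (Real.pi.toNNReal)⁻¹ • (volume : Measure ℂ)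

instance : SigmaFinite dA := by unfold dA; infer_instance

/-- The product measure `dA_n` on `ℂⁿ`. -/
def dAn (n : ℕ) : Measure (Fin n → ℂ) := Measure.pi fun _ => dA

def eToENN (x : EReal) : ℝ≥0∞ := if x = ⊤ then ⊤ else ENNReal.ofReal x.toReal

/-- `e^x ∈ [0,∞]` for extended-real `x`. -/
def eExp (x : EReal) : ℝ≥0∞ :=
  if x = ⊤ then ⊤ else if x = ⊥ then 0 else ENNReal.ofReal (Real.exp x.toReal)

/-- `e^{-t·q}` for extended-real `q`, with the convention that it is `0` when `q = +∞`. -/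
def expNeg (t : ℝ) (q : EReal) : ℝ := if q = ⊤ then 0 else Real.exp (-(t * q.toReal))

/-- Boltzmann weight `e^{-β H}` for `m` particles in the external field `n·Q`, where
`H = Σ_{j≠k} log 1/|ζ_j-ζ_k| + n Σ_j Q(ζ_j)`, with the convention `e^{-βH} = 0`
where `H = +∞`. -/
def boltzW (Q : ℂ → EReal) (β : ℝ) (m n : ℕ) (ζ : Fin m → ℂ) : ℝ :=
  (∏ p ∈ Finset.univ.filter (fun p : Fin m × Fin m => p.1 ≠ p.2),
      dist (ζ p.1) (ζ p.2) ^ β) * ∏ j, expNeg (β * n) (Q (ζ j))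

/-- `e^{-β H_n}`. -/
def boltz (Q : ℂ → EReal) (β : ℝ) (n : ℕ) : (Fin n → ℂ) → ℝ := boltzW Q β n n

/-- The partition function `Z_n^β = ∫ e^{-βH_n} dA_n`. -/
def Zpart (Q : ℂ → EReal) (β : ℝ) (n : ℕ) : ℝ≥0∞ :=
  ∫⁻ ζ, ENNReal.ofReal (boltz Q β n ζ) ∂(dAn n)

/-- The Gibbs measure `P_n^β = Z⁻¹ e^{-βH_n} dA_n`. -/
def gibbs (Q : ℂ → EReal) (β : ℝ) (n : ℕ) : Measure (Fin n → ℂ) :=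
  (Zpart Q β n)⁻¹ • (dAn n).withDensity (fun ζ => ENNReal.ofReal (boltz Q β n ζ))

/-- The normalized Laplacian `ΔQ = (1/4)(Q_xx + Q_yy)` of a (C²) function. -/
def lap (f : ℂ → ℝ) (z : ℂ) : ℝ :=
  (1 / 4) * (iteratedDeriv 2 (fun t : ℝ => f (z + (t : ℂ))) 0 +
    iteratedDeriv 2 (fun t : ℝ => f (z + (t : ℂ) * Complex.I)) 0)

/-- The logarithmic potential `∫ log|z-w| dσ(w)`. -/
def logPot (σ : Measure ℂ) (z : ℂ) : ℝ := ∫ w, Real.log (dist z w) ∂σ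

/-- The effective potential `Q_eff = Q - Q̌` where `Q̌ = 2∫log|z-w|dσ(w) + γ`. -/
def Qeff (Q : ℂ → EReal) (σ : Measure ℂ) (γ : ℝ) (z : ℂ) : EReal :=
  Q z - ((2 * logPot σ z + γ : ℝ) : EReal)

/-- The logarithmic kernel `log 1/|z-w|`, equal to `+∞` on the diagonal. -/
def logKer (z w : ℂ) : EReal :=
  if z = w then ⊤ else ((Real.log (1 / dist z w) : ℝ) : EReal)

/-- EReal-valued integral: `∫ f⁺ - ∫ f⁻`. -/
def eInt {α : Type*} [MeasurableSpace α] (μ : Measure α) (f : α → EReal) : EReal :=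
  ((∫⁻ x, eToENN (f x) ∂μ : ℝ≥0∞) : EReal) - ((∫⁻ x, eToENN (-(f x)) ∂μ : ℝ≥0∞) : EReal)

/-- The logarithmic `Q`-energy `I_Q[μ] = ∬ log 1/|z-w| dμ(z)dμ(w) + ∫ Q dμ`. -/
def energy (Q : ℂ → EReal) (μ : Measure ℂ) : EReal :=
  eInt μ (fun z => eInt μ (fun w => logKer z w)) + eInt μ Q

/-- `Γ` is an everywhere `C¹`-smooth Jordan curve. -/
def IsC1JordanCurve (Γ : Set ℂ) : Prop :=
  ∃ γ : ℝ → ℂ, ContDiff ℝ 1 γ ∧ Function.Periodic γ 1 ∧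
    Set.InjOn γ (Set.Ico 0 1) ∧ (∀ t, deriv γ t ≠ 0) ∧ Γ = γ '' Set.Icc 0 1

/-- The standing assumptions on the external potential `Q`: `Qr` is the real-valued
restriction of `Q` to the interior of its finiteness set, `σ` is the equilibrium measure with
droplet `S = supp σ`, `Q_eff = Q - Q̌ = Q - (2·logPot σ + γ)`, and
`c₀ = min{ΔQ(η) : η ∈ ∂S} > 0`. -/
structure Standing where
  Q : ℂ → EReal
  Qr : ℂ → ℝ
  σ : Measure ℂ
  S : Set ℂ
  γ : ℝ
  c0 : ℝ
  /-- `Q` takes values in `ℝ ∪ {+∞}`. -/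
  hbot : ∀ z, Q z ≠ ⊥
  /-- `Q` is lower semicontinuous. -/
  lsc : LowerSemicontinuous Q
  /-- the finiteness set `Σ = {Q < ∞}` has nonempty interior. -/
  hfin : (interior {z | Q z ≠ ⊤}).Nonempty
  /-- growth condition: `liminf_{ζ→∞} Q(ζ)/(2 log|ζ|) > 1`. -/
  growth : ∃ k : ℝ, 1 < k ∧
    ∀ᶠ z in Filter.cocompact ℂ, ((k * (2 * Real.log ‖z‖) : ℝ) : EReal) ≤ Q z
  /-- `σ` is a Borel probability measure. -/
  probσ : IsProbabilityMeasure σ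
  /-- `S` is the support of `σ`. -/
  hSsupp : ∀ z, z ∈ S ↔ ∀ U : Set ℂ, IsOpen U → z ∈ U → σ U ≠ 0
  /-- the droplet is compact. -/
  compS : IsCompact S
  /-- `σ` minimizes the `Q`-energy among compactly supported probability measures. -/
  minim : ∀ μ : Measure ℂ, IsProbabilityMeasure μ → (∃ K, IsCompact K ∧ μ Kᶜ = 0) →
    energy Q σ ≤ energy Q μ
  /-- `Qr` represents `Q` on the interior of the finiteness set. -/
  hQQr : ∀ z ∈ interior {z | Q z ≠ ⊤}, Q z = (Qr z : EReal)
  /-- `Q` is `C²` on the interior of the finiteness set. -/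
  hC2 : ContDiffOn ℝ 2 Qr (interior {z | Q z ≠ ⊤})
  /-- the droplet is contained in the interior of the finiteness set. -/
  hSsub : S ⊆ interior {z | Q z ≠ ⊤}
  /-- `σ` has density `ΔQ·1_S` with respect to `dA`. -/
  density : σ = dA.withDensity (fun z => ENNReal.ofReal (S.indicator (lap Qr) z))
  /-- `ΔQ > 0` on a neighbourhood of `∂S`. -/
  hlap : ∃ U, IsOpen U ∧ frontier S ⊆ U ∧ ∀ z ∈ U, 0 < lap Qr z
  /-- `∂S` is a finite union of `C¹`-smooth Jordan curves. -/
  hbdry : ∃ (m : ℕ) (Γ : Fin m → Set ℂ), frontier S = ⋃ i, Γ i ∧ ∀ i, IsC1JordanCurve (Γ i)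
  /-- `Q_eff = 0` on `S`. -/
  hQeffS : ∀ z ∈ S, Qeff Q σ γ z = 0
  /-- `Q_eff > 0` off `S`. -/
  hQeffSc : ∀ z ∉ S, 0 < Qeff Q σ γ z
  /-- `c₀ = min{ΔQ(η) : η ∈ ∂S}`. -/
  hc0def : c0 = sInf (lap Qr '' frontier S)
  /-- `c₀ > 0`. -/
  hc0pos : 0 < c0


/-!
Lower semicontinuity keeps `Q` locally bounded below, so `Q e^{-Q}` is locally bounded and hence
locally integrable. Near infinity `Q ≥ 2k log |ζ|` with `k > 1`, and `t e^{-t} ≤ (1 - α)⁻¹ e^{-αt}`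
for `α < 1`; with `α = (1 + k) / 2k` this gives `Q e^{-Q} = O(|ζ|^{-(1+k)})`, which is integrable
at infinity in the plane because `1 + k > 2`.
-/

open Asymptotics

namespace Real

lemma abs_mul_exp_neg_le_of_le {b t : ℝ} (hbt : b ≤ t) :
    |t * exp (-t)| ≤ |b| * exp (-b) + exp (-1) := by
  rcases le_or_gt 0 t with ht | ht
  · calc |t * exp (-t)| = t * exp (-t) := abs_of_nonneg (by positivity)
      _ ≤ exp (-1) := mul_exp_neg_le_exp_neg_one t
      _ ≤ |b| * exp (-b) + exp (-1) := le_add_of_nonneg_left (by positivity)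
  · calc |t * exp (-t)| = -t * exp (-t) := by rw [abs_mul, abs_exp, abs_of_neg ht]
      _ ≤ |b| * exp (-b) :=
          mul_le_mul (by linarith [neg_le_abs b]) (exp_le_exp.2 (by linarith)) (exp_pos _).le
            (abs_nonneg b)
      _ ≤ |b| * exp (-b) + exp (-1) := le_add_of_nonneg_right (exp_pos _).le

lemma mul_exp_neg_le_inv_one_sub_mul_exp_neg {α : ℝ} (hα : α < 1) (t : ℝ) :
    t * exp (-t) ≤ (1 - α)⁻¹ * exp (-(α * t)) := by
  have h1α : 0 < 1 - α := by linarith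
  -- `x ≤ exp x` at `x = (1 - α) t`
  have ht : t ≤ (1 - α)⁻¹ * exp ((1 - α) * t) := by
    rw [le_inv_mul_iff₀ h1α]
    linarith [add_one_le_exp ((1 - α) * t)]
  calc t * exp (-t) ≤ (1 - α)⁻¹ * exp ((1 - α) * t) * exp (-t) := by gcongr
    _ = (1 - α)⁻¹ * exp (-(α * t)) := by rw [mul_assoc, ← exp_add]; ring_nf

end Real

lemma EReal.abs_toReal_mul_exp_neg_toReal_le {q : EReal} {b M : ℝ} (hbq : (b : EReal) ≤ q)
    (hM : ∀ t : ℝ, b ≤ t → |t * Real.exp (-t)| ≤ M) :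
    |q.toReal * Real.exp (-q.toReal)| ≤ M := by
  induction q using EReal.rec with
  | bot => simp at hbq
  | coe t => exact hM t (EReal.coe_le_coe_iff.1 hbq)
  | top => simpa using (abs_nonneg _).trans (hM b le_rfl)

lemma LowerSemicontinuous.locallyIntegrable_toReal_mul_exp_neg_toReal {X : Type*}
    [TopologicalSpace X] [MeasurableSpace X] [OpensMeasurableSpace X] {μ : Measure X}
    [IsLocallyFiniteMeasure μ] {Q : X → EReal} (hQ : LowerSemicontinuous Q)
    (hbot : ∀ x, Q x ≠ ⊥) :
    LocallyIntegrable (fun x => (Q x).toReal * Real.exp (-(Q x).toReal)) μ := by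
  have hmeas : Measurable fun x => (Q x).toReal * Real.exp (-(Q x).toReal) := by
    have := hQ.measurable.ereal_toReal
    fun_prop
  intro x
  obtain ⟨b, -, hb⟩ := EReal.exists_between_coe_real (hbot x).bot_lt
  refine Measure.FiniteAtFilter.integrableAtFilter
    hmeas.stronglyMeasurable.stronglyMeasurableAtFilter (μ.finiteAt_nhds x)
    (isBoundedUnder_of_eventually_le (a := |b| * Real.exp (-b) + Real.exp (-1)) ?_)
  filter_upwards [hQ x b hb] with y hy
  exact EReal.abs_toReal_mul_exp_neg_toReal_le hy.le fun t => Real.abs_mul_exp_neg_le_of_le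

lemma isBigO_toReal_mul_exp_neg_toReal_of_log_growth {E : Type*} [NormedAddCommGroup E]
    [ProperSpace E] {Q : E → EReal} {r s : ℝ} (hr : 0 ≤ r) (hrs : r < s)
    (hQ : ∀ᶠ z in cocompact E, ((s * Real.log ‖z‖ : ℝ) : EReal) ≤ Q z) :
    (fun z => (Q z).toReal * Real.exp (-(Q z).toReal)) =O[cocompact E] fun z => ‖z‖ ^ (-r) := by
  have hs : 0 < s := hr.trans_lt hrs
  set α := r / s
  have h1α : 0 < 1 - α := by linarith [(div_lt_one hs).2 hrs]
  refine IsBigO.of_bound (1 - α)⁻¹ ?_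
  filter_upwards [hQ, tendsto_norm_cocompact_atTop.eventually_ge_atTop 1] with z hQz hz
  have hlog : 0 ≤ Real.log ‖z‖ := Real.log_nonneg hz
  have hz0 : 0 < ‖z‖ := one_pos.trans_le hz
  rw [Real.norm_eq_abs, Real.norm_of_nonneg (by positivity)]
  refine EReal.abs_toReal_mul_exp_neg_toReal_le hQz fun t ht => ?_
  have ht0 : 0 ≤ t := (by positivity : 0 ≤ s * Real.log ‖z‖).trans ht
  calc |t * Real.exp (-t)| = t * Real.exp (-t) := abs_of_nonneg (by positivity)
    _ ≤ (1 - α)⁻¹ * Real.exp (-(α * t)) :=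
        Real.mul_exp_neg_le_inv_one_sub_mul_exp_neg (by linarith) t
    _ ≤ (1 - α)⁻¹ * Real.exp (-(α * (s * Real.log ‖z‖))) := by gcongr
    _ = (1 - α)⁻¹ * ‖z‖ ^ (-r) := by
        rw [Real.rpow_def_of_pos hz0, ← mul_assoc, div_mul_cancel₀ r hs.ne']
        ring_nf

lemma integrableAtFilter_cocompact_norm_rpow_neg {E : Type*} [NormedAddCommGroup E]
    [NormedSpace ℝ E] [FiniteDimensional ℝ E] [MeasurableSpace E] [BorelSpace E]
    {μ : Measure E} [μ.IsAddHaarMeasure] {r : ℝ} (hr : (Module.finrank ℝ E : ℝ) < r) :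
    IntegrableAtFilter (fun x : E => ‖x‖ ^ (-r)) (cocompact E) μ := by
  have hr0 : 0 ≤ r := (Nat.cast_nonneg _).trans hr.le
  refine IsBigO.integrableAtFilter ?_
    (Measurable.stronglyMeasurable (by fun_prop)).stronglyMeasurableAtFilter
    ((integrable_one_add_norm hr).integrableAtFilter _)
  refine IsBigO.of_bound (2 ^ r) ?_
  filter_upwards [tendsto_norm_cocompact_atTop.eventually_ge_atTop 1] with x hx
  have hx0 : 0 < ‖x‖ := one_pos.trans_le hx
  rw [Real.norm_of_nonneg (by positivity), Real.norm_of_nonneg (by positivity)]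
  calc ‖x‖ ^ (-r) ≤ ((1 + ‖x‖) / 2) ^ (-r) :=
        Real.rpow_le_rpow_of_nonpos (by positivity) (by linarith) (by linarith)
    _ = 2 ^ r * (1 + ‖x‖) ^ (-r) := by
        rw [Real.div_rpow (by positivity) zero_le_two, Real.rpow_neg zero_le_two]
        field_simp

/-- **Lemma (integrability of `Q e^{-Q}`).** If `Q : ℂ → ℝ ∪ {+∞}` is lower semicontinuous and
`liminf_{ζ→∞} Q(ζ)/(2log|ζ|) > 1`, then `∫ Q e^{-Q} dA < ∞`, with `Q e^{-Q} := 0` on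
`{Q = +∞}`. (Note that `(Q z).toReal * exp(-(Q z).toReal)` equals `0` when `Q z = ⊤`.) -/
theorem integrable_Q_exp_neg_Q (Q : ℂ → EReal) (hbot : ∀ z, Q z ≠ ⊥)
    (lsc : LowerSemicontinuous Q)
    (growth : ∃ k : ℝ, 1 < k ∧
      ∀ᶠ z in Filter.cocompact ℂ, ((k * (2 * Real.log ‖z‖) : ℝ) : EReal) ≤ Q z) :
    Integrable (fun z : ℂ => (Q z).toReal * Real.exp (-(Q z).toReal)) dA := by
  obtain ⟨k, hk, hgrowth⟩ := growth
  have hQ : ∀ᶠ z in cocompact ℂ, ((2 * k * Real.log ‖z‖ : ℝ) : EReal) ≤ Q z := by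
    simpa only [mul_left_comm, mul_assoc] using hgrowth
  have hdim : (Module.finrank ℝ ℂ : ℝ) < 1 + k := by
    rw [Complex.finrank_real_complex]; push_cast; linarith
  exact ((lsc.locallyIntegrable_toReal_mul_exp_neg_toReal hbot).integrable_of_isBigO_cocompact
    (isBigO_toReal_mul_exp_neg_toReal_of_log_growth (by linarith) (by linarith) hQ)
    (integrableAtFilter_cocompact_norm_rpow_neg hdim)).smul_measure_nnreal
end
end

section
/- Under the standing assumptions on Q, let (β_n) be a sequence of positive reals with β_n·n/log n → ∞, and define the reduced partition function Z_{n,n−1}^β := ∫_{ℂ^{n−1}} exp(−β[ Σ_{1≤j≠k≤n−1} log(1/|ζ_j−ζ_k|) + n·Σ_{j=1}^{n−1} Q(ζ_j) ]) dA_{n−1} (i.e. n−1 particles in the external field n·Q). Then there exist constants C > 0, h > 0 and n₀ ∈ ℕ such that for all n ≥ n₀, Z_{n,n−1}^{β_n} ≤ C·e^{β_n·h·n}·Z_n^{β_n}. -/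
open MeasureTheory Filter Topology
open scoped ENNReal NNReal Real

noncomputable section

/-!
Fix a closed disc `B = B(z₀, r)` inside the interior of `{Q < ∞}` on which `Q ≤ M`, and integrate
the last particle of an `n`-particle configuration only over `B`. Its field weight there is at
least `e^{-βnM}`. For the interaction with the other `n - 1` particles `ξ_j`, Jensen's inequality
for `exp` bounds the average over `B` of `∏_j |z - ξ_j|^{2β}` from below by the exponential of the
average of `2β ∑_j log |z - ξ_j|`, and `∫_B log |z - w| dA ≥ -1` for every `w` (the layer-cake
formula gives `∫ log⁺ |z - w|⁻¹ dA ≤ 1`). Integrating over the remaining particles yields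
`Z_n ≥ r² e^{-βn(M + 2/r²)} Z_{n,n-1}`, i.e. the claim with `C = r⁻²` and `h = M + 2/r²`.
-/

open Real

lemma dA_apply (s : Set ℂ) : dA s = volume s / NNReal.pi := by
  rw [dA, Measure.smul_apply, ENNReal.smul_def, smul_eq_mul, ENNReal.div_eq_inv_mul,
    ENNReal.coe_inv (by simp [Real.pi_pos]), ← NNReal.coe_real_pi, Real.toNNReal_coe]

instance : IsFiniteMeasureOnCompacts dA := by unfold dA; infer_instance

instance : NullSingletonClass dA := ⟨fun z => by simp [dA_apply]⟩

instance (n : ℕ) : SigmaFinite (dAn n) := by unfold dAn; infer_instance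

lemma dA_ball (z : ℂ) {r : ℝ} (hr : 0 ≤ r) : dA (Metric.ball z r) = ENNReal.ofReal (r ^ 2) := by
  rw [dA_apply, Complex.volume_ball, ENNReal.ofReal_pow hr, ENNReal.mul_div_cancel_right] <;>
    simp [NNReal.pi_ne_zero]

lemma dA_closedBall (z : ℂ) {r : ℝ} (hr : 0 ≤ r) :
    dA (Metric.closedBall z r) = ENNReal.ofReal (r ^ 2) := by
  rw [dA_apply, Complex.volume_closedBall, ENNReal.ofReal_pow hr,
    ENNReal.mul_div_cancel_right] <;> simp [NNReal.pi_ne_zero]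

lemma lintegral_dAn_succ {m : ℕ} {f : (Fin (m + 1) → ℂ) → ℝ≥0∞} (hf : Measurable f) :
    ∫⁻ ζ, f ζ ∂dAn (m + 1) = ∫⁻ ξ, ∫⁻ z, f (Fin.snoc ξ z) ∂dA ∂dAn m := by
  have he := (measurePreserving_piFinSuccAbove (fun _ : Fin (m + 1) => dA) (Fin.last m)).symm
  rw [dAn, ← he.lintegral_comp hf]
  refine (lintegral_prod_symm _ (hf.comp he.measurable).aemeasurable).trans ?_
  simp [MeasurableEquiv.piFinSuccAbove_symm_apply, Fin.snocEquiv, dAn]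

lemma lintegral_exp_neg_Ioi_zero : ∫⁻ t in Set.Ioi (0 : ℝ), ENNReal.ofReal (exp (-t)) = 1 := by
  have hint : IntegrableOn (fun t : ℝ => exp (-t)) (Set.Ioi 0) := by
    simpa using exp_neg_integrableOn_Ioi 0 one_pos
  rw [← ofReal_integral_eq_lintegral_ofReal hint (.of_forall fun _ => (exp_pos _).le),
    integral_exp_neg_Ioi_zero, ENNReal.ofReal_one]

lemma mem_ball_of_lt_posLog_inv_dist {w z : ℂ} {t : ℝ} (ht : 0 < t)
    (hz : t < log⁺ (dist w z)⁻¹) : z ∈ Metric.ball w (exp (-t)) := by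
  rw [Metric.mem_ball, dist_comm]
  rcases (dist_nonneg (x := w) (y := z)).eq_or_lt with h | h
  · rw [← h]; exact exp_pos _
  · have : t < log (dist w z)⁻¹ := (lt_max_iff.mp hz).resolve_left ht.not_gt
    rw [log_inv, lt_neg] at this
    exact (log_lt_iff_lt_exp h).mp this

lemma lintegral_posLog_inv_dist_le_one (w : ℂ) :
    ∫⁻ z, ENNReal.ofReal (log⁺ (dist w z)⁻¹) ∂dA ≤ 1 := by
  rw [lintegral_eq_lintegral_meas_lt _ (.of_forall fun _ => posLog_nonneg) (by fun_prop)]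
  have hlevel : ∀ t ∈ Set.Ioi (0 : ℝ),
      dA {z | t < log⁺ (dist w z)⁻¹} ≤ ENNReal.ofReal (exp (-t)) := fun t (ht : 0 < t) =>
    calc dA {z | t < log⁺ (dist w z)⁻¹} ≤ dA (Metric.ball w (exp (-t))) :=
          measure_mono fun _ => mem_ball_of_lt_posLog_inv_dist ht
      _ = ENNReal.ofReal (exp (-t) ^ 2) := dA_ball w (exp_pos _).le
      _ ≤ ENNReal.ofReal (exp (-t)) := ENNReal.ofReal_le_ofReal <|
          pow_le_of_le_one (exp_pos _).le (exp_le_one_iff.mpr (by linarith)) two_ne_zero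
  calc ∫⁻ t in Set.Ioi 0, dA {z | t < log⁺ (dist w z)⁻¹}
      ≤ ∫⁻ t in Set.Ioi 0, ENNReal.ofReal (exp (-t)) := setLIntegral_mono (by fun_prop) hlevel
    _ = 1 := lintegral_exp_neg_Ioi_zero

lemma integrable_posLog_inv_dist (w : ℂ) : Integrable (fun z => log⁺ (dist w z)⁻¹) dA :=
  ⟨by fun_prop, (hasFiniteIntegral_iff_ofReal (.of_forall fun _ => posLog_nonneg)).mpr
    ((lintegral_posLog_inv_dist_le_one w).trans_lt ENNReal.one_lt_top)⟩

lemma integral_posLog_inv_dist_le_one (w : ℂ) : ∫ z, log⁺ (dist w z)⁻¹ ∂dA ≤ 1 := by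
  rw [integral_eq_lintegral_of_nonneg_ae (.of_forall fun _ => posLog_nonneg) (by fun_prop)]
  exact ENNReal.toReal_le_of_le_ofReal zero_le_one
    (by simpa using lintegral_posLog_inv_dist_le_one w)

lemma integrableOn_log_dist_closedBall (w z₀ : ℂ) (r : ℝ) :
    IntegrableOn (fun z => log (dist w z)) (Metric.closedBall z₀ r) dA := by
  simp_rw [← posLog_sub_posLog_inv]
  exact (ContinuousOn.integrableOn_compact (isCompact_closedBall z₀ r) (by fun_prop)).sub
    (integrable_posLog_inv_dist w).integrableOn

lemma neg_one_le_setIntegral_log_dist (w z₀ : ℂ) (r : ℝ) :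
    -1 ≤ ∫ z in Metric.closedBall z₀ r, log (dist w z) ∂dA := by
  simp_rw [← posLog_sub_posLog_inv]
  rw [integral_sub (ContinuousOn.integrableOn_compact (isCompact_closedBall z₀ r) (by fun_prop))
    (integrable_posLog_inv_dist w).integrableOn]
  have h₁ : 0 ≤ ∫ z in Metric.closedBall z₀ r, log⁺ (dist w z) ∂dA :=
    setIntegral_nonneg measurableSet_closedBall fun _ _ => posLog_nonneg
  have h₂ : ∫ z in Metric.closedBall z₀ r, log⁺ (dist w z)⁻¹ ∂dA ≤ 1 :=
    (setIntegral_le_integral (integrable_posLog_inv_dist w)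
      (.of_forall fun _ => posLog_nonneg)).trans (integral_posLog_inv_dist_le_one w)
  linarith

lemma exp_sum_mul_log_dist_ae_eq {m : ℕ} (ξ : Fin m → ℂ) (a : ℝ) (μ : Measure ℂ)
    [NullSingletonClass μ] :
    (fun z => exp (∑ j, a * log (dist (ξ j) z))) =ᵐ[μ] fun z => ∏ j, dist (ξ j) z ^ a := by
  filter_upwards [ae_all_iff.mpr fun j => μ.ae_ne (ξ j)] with z hz
  rw [exp_sum]
  refine Finset.prod_congr rfl fun j _ => ?_
  rw [rpow_def_of_pos (dist_pos.mpr (hz j).symm), mul_comm]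

lemma lintegral_closedBall_prod_dist_rpow_ge (z₀ : ℂ) {r a : ℝ} (hr : 0 < r) (ha : 0 ≤ a)
    {m : ℕ} (ξ : Fin m → ℂ) :
    ENNReal.ofReal (r ^ 2 * exp (-(a * m) / r ^ 2)) ≤
      ∫⁻ z in Metric.closedBall z₀ r, ENNReal.ofReal (∏ j, dist (ξ j) z ^ a) ∂dA := by
  set μ := dA.restrict (Metric.closedBall z₀ r)
  have hμ : μ.real Set.univ = r ^ 2 := by
    rw [measureReal_def, Measure.restrict_apply_univ, dA_closedBall z₀ hr.le,
      ENNReal.toReal_ofReal (by positivity)]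
  have : IsFiniteMeasure μ := ⟨by simp [μ, dA_closedBall z₀ hr.le]⟩
  have : NeZero μ := ⟨fun h => (pow_pos hr 2).ne' (by simpa [h] using hμ.symm)⟩
  set f : ℂ → ℝ := fun z => ∑ j, a * log (dist (ξ j) z)
  have hf : Integrable f μ :=
    integrable_finsetSum _ fun j _ => (integrableOn_log_dist_closedBall _ z₀ r).const_mul a
  have hg : Integrable (fun z => ∏ j, dist (ξ j) z ^ a) μ :=
    ContinuousOn.integrableOn_compact (isCompact_closedBall z₀ r) (by fun_prop)
  have hexp := exp_sum_mul_log_dist_ae_eq ξ a μ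
  have hjensen : exp (⨍ z, f z ∂μ) ≤ ⨍ z, exp (f z) ∂μ :=
    convexOn_exp.map_average_le continuous_exp.continuousOn isClosed_univ
      (.of_forall fun _ => Set.mem_univ _) hf (hg.congr hexp.symm)
  have hintf : -(a * m) ≤ ∫ z, f z ∂μ := by
    rw [integral_finsetSum _ fun j _ => (integrableOn_log_dist_closedBall _ z₀ r).const_mul a]
    calc -(a * m) = ∑ _j : Fin m, a * -1 := by simp; ring
      _ ≤ _ := Finset.sum_le_sum fun j _ => by
        rw [integral_const_mul]
        exact mul_le_mul_of_nonneg_left (neg_one_le_setIntegral_log_dist _ z₀ r) ha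
  rw [average_eq, average_eq, hμ, integral_congr_ae hexp, smul_eq_mul, smul_eq_mul] at hjensen
  rw [← ofReal_integral_eq_lintegral_ofReal hg (.of_forall fun z => by positivity)]
  refine ENNReal.ofReal_le_ofReal ?_
  calc r ^ 2 * exp (-(a * m) / r ^ 2) ≤ r ^ 2 * exp ((r ^ 2)⁻¹ * ∫ z, f z ∂μ) := by
        rw [div_eq_inv_mul]; gcongr
    _ ≤ r ^ 2 * ((r ^ 2)⁻¹ * ∫ z, ∏ j, dist (ξ j) z ^ a ∂μ) := by gcongr
    _ = ∫ z, ∏ j, dist (ξ j) z ^ a ∂μ := by field_simp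

open Finset in
lemma prod_offDiag_eq_prod_prod_ite {M α : Type*} [CommMonoid M] {k : ℕ} (g : α → α → M)
    (η : Fin k → α) :
    ∏ p ∈ univ.filter (fun p : Fin k × Fin k => p.1 ≠ p.2), g (η p.1) (η p.2) =
      ∏ i, ∏ j, if i ≠ j then g (η i) (η j) else 1 := by
  rw [prod_filter, Fintype.prod_prod_type]

open Finset in
lemma prod_offDiag_snoc {M α : Type*} [CommMonoid M] {m : ℕ} (g : α → α → M) (ξ : Fin m → α)
    (z : α) :
    ∏ p ∈ univ.filter (fun p : Fin (m + 1) × Fin (m + 1) => p.1 ≠ p.2),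
        g (Fin.snoc (α := fun _ => α) ξ z p.1) (Fin.snoc (α := fun _ => α) ξ z p.2) =
      (∏ p ∈ univ.filter (fun p : Fin m × Fin m => p.1 ≠ p.2), g (ξ p.1) (ξ p.2)) *
        ∏ j, g (ξ j) z * g z (ξ j) := by
  simp only [prod_offDiag_eq_prod_prod_ite, Fin.prod_univ_castSucc, Fin.snoc_castSucc,
    Fin.snoc_last, ne_eq, Fin.castSucc_inj, Fin.castSucc_ne_last, (Fin.castSucc_ne_last _).symm,
    not_false_eq_true, if_true, not_true_eq_false, if_false, mul_one, prod_mul_distrib]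
  ac_rfl

lemma rpow_mul_self_eq_rpow_two_mul {x : ℝ} (hx : 0 ≤ x) (y : ℝ) :
    x ^ y * x ^ y = x ^ (2 * y) := by
  rw [mul_comm 2, ← Nat.cast_ofNat, rpow_mul_natCast hx, sq]

lemma boltzW_snoc (Q : ℂ → EReal) (β : ℝ) (m n : ℕ) (ξ : Fin m → ℂ) (z : ℂ) :
    boltzW Q β (m + 1) n (Fin.snoc ξ z) =
      boltzW Q β m n ξ * ((∏ j, dist (ξ j) z ^ (2 * β)) * expNeg (β * n) (Q z)) := by
  rw [boltzW, boltzW, prod_offDiag_snoc (fun x y => dist x y ^ β), Fin.prod_univ_castSucc]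
  simp only [Fin.snoc_castSucc, Fin.snoc_last, dist_comm z,
    rpow_mul_self_eq_rpow_two_mul dist_nonneg]
  ring

lemma expNeg_nonneg (t : ℝ) (q : EReal) : 0 ≤ expNeg t q := by
  unfold expNeg; split_ifs <;> positivity

lemma exp_neg_mul_le_expNeg {t M : ℝ} (ht : 0 ≤ t) (hM : 0 ≤ M) {q : EReal} (hq : q ≤ M) :
    exp (-(t * M)) ≤ expNeg t q := by
  have hq_top : q ≠ ⊤ := ne_top_of_le_ne_top (EReal.coe_ne_top M) hq
  have hq_le : q.toReal ≤ M := by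
    by_cases hq_bot : q = ⊥
    · rwa [hq_bot, EReal.toReal_bot]
    · simpa using EReal.toReal_le_toReal hq hq_bot (EReal.coe_ne_top M)
  rw [expNeg, if_neg hq_top]
  gcongr

lemma boltzW_nonneg (Q : ℂ → EReal) (β : ℝ) (m n : ℕ) (ζ : Fin m → ℂ) :
    0 ≤ boltzW Q β m n ζ :=
  mul_nonneg (Finset.prod_nonneg fun _ _ => by positivity)
    (Finset.prod_nonneg fun _ _ => expNeg_nonneg _ _)

lemma Measurable.expNeg {Q : ℂ → EReal} (hQ : Measurable Q) (t : ℝ) :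
    Measurable fun z => expNeg t (Q z) :=
  Measurable.ite (hQ (measurableSet_singleton ⊤)) measurable_const
    (measurable_exp.comp (hQ.ereal_toReal.const_mul t).neg)

lemma measurable_boltzW {Q : ℂ → EReal} (hQ : Measurable Q) (β : ℝ) (m n : ℕ) :
    Measurable (boltzW Q β m n) :=
  (Finset.measurable_prod _ fun p _ =>
      ((measurable_pi_apply p.1).dist (measurable_pi_apply p.2)).pow_const β).mul
    (Finset.measurable_prod _ fun j _ => (hQ.expNeg _).comp (measurable_pi_apply j))

lemma lintegral_prod_dist_rpow_mul_expNeg_ge {Q : ℂ → EReal} {z₀ : ℂ} {r M : ℝ} (hr : 0 < r)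
    (hM : 0 ≤ M) (hQM : ∀ z ∈ Metric.closedBall z₀ r, Q z ≤ M) {β : ℝ} (hβ : 0 ≤ β) {m n : ℕ}
    (hmn : m ≤ n) (ξ : Fin m → ℂ) :
    ENNReal.ofReal (r ^ 2 * exp (-(β * (M + 2 / r ^ 2) * n))) ≤
      ∫⁻ z, ENNReal.ofReal ((∏ j, dist (ξ j) z ^ (2 * β)) * expNeg (β * n) (Q z)) ∂dA := by
  have hfield : ∀ z ∈ Metric.closedBall z₀ r,
      ENNReal.ofReal (exp (-(β * n * M))) * ENNReal.ofReal (∏ j, dist (ξ j) z ^ (2 * β)) ≤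
        ENNReal.ofReal ((∏ j, dist (ξ j) z ^ (2 * β)) * expNeg (β * n) (Q z)) := fun z hz => by
    rw [← ENNReal.ofReal_mul (exp_pos _).le, mul_comm]
    gcongr
    exact exp_neg_mul_le_expNeg (by positivity) hM (hQM z hz)
  calc ENNReal.ofReal (r ^ 2 * exp (-(β * (M + 2 / r ^ 2) * n)))
      ≤ ENNReal.ofReal (exp (-(β * n * M))) *
          ENNReal.ofReal (r ^ 2 * exp (-(2 * β * m) / r ^ 2)) := by
        rw [← ENNReal.ofReal_mul (exp_pos _).le, mul_left_comm, ← exp_add]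
        gcongr
        have hm : 2 * β * m / r ^ 2 ≤ 2 * β * n / r ^ 2 := by gcongr
        have : β * (M + 2 / r ^ 2) * n = β * n * M + 2 * β * n / r ^ 2 := by ring
        rw [neg_div]
        linarith
    _ ≤ ENNReal.ofReal (exp (-(β * n * M))) *
          ∫⁻ z in Metric.closedBall z₀ r, ENNReal.ofReal (∏ j, dist (ξ j) z ^ (2 * β)) ∂dA := by
        gcongr
        exact lintegral_closedBall_prod_dist_rpow_ge z₀ hr (by positivity) ξ
    _ ≤ ∫⁻ z in Metric.closedBall z₀ r,
          ENNReal.ofReal ((∏ j, dist (ξ j) z ^ (2 * β)) * expNeg (β * n) (Q z)) ∂dA := by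
        rw [← lintegral_const_mul' _ _ ENNReal.ofReal_ne_top]
        exact setLIntegral_mono' measurableSet_closedBall hfield
    _ ≤ _ := setLIntegral_le_lintegral _ _

lemma mul_lintegral_boltzW_le_Zpart_succ {Q : ℂ → EReal} (hQ : Measurable Q) {z₀ : ℂ}
    {r M : ℝ} (hr : 0 < r) (hM : 0 ≤ M) (hQM : ∀ z ∈ Metric.closedBall z₀ r, Q z ≤ M) {β : ℝ}
    (hβ : 0 ≤ β) (m : ℕ) :
    ENNReal.ofReal (r ^ 2 * exp (-(β * (M + 2 / r ^ 2) * (m + 1 : ℕ)))) *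
        ∫⁻ ξ, ENNReal.ofReal (boltzW Q β m (m + 1) ξ) ∂dAn m ≤
      Zpart Q β (m + 1) := by
  rw [Zpart, boltz, lintegral_dAn_succ (measurable_boltzW hQ β _ _).ennreal_ofReal,
    ← lintegral_const_mul' _ _ ENNReal.ofReal_ne_top]
  refine lintegral_mono fun ξ => ?_
  simp_rw [boltzW_snoc, ENNReal.ofReal_mul (boltzW_nonneg _ _ _ _ _)]
  rw [lintegral_const_mul' _ _ ENNReal.ofReal_ne_top, mul_comm]
  gcongr
  exact lintegral_prod_dist_rpow_mul_expNeg_ge hr hM hQM hβ (Nat.le_succ m) ξ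

lemma Standing.exists_closedBall_Q_le (A : Standing) :
    ∃ (z₀ : ℂ) (r M : ℝ), 0 < r ∧ 0 ≤ M ∧ ∀ z ∈ Metric.closedBall z₀ r, A.Q z ≤ M := by
  obtain ⟨z₀, hz₀⟩ := A.hfin
  obtain ⟨r, hr, hball⟩ :=
    Metric.nhds_basis_closedBall.mem_iff.mp (isOpen_interior.mem_nhds hz₀)
  obtain ⟨M, hM⟩ := (isCompact_closedBall z₀ r).exists_bound_of_continuousOn
    (A.hC2.continuousOn.mono hball)
  refine ⟨z₀, r, M, hr, (norm_nonneg _).trans (hM z₀ (Metric.mem_closedBall_self hr.le)),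
    fun z hz => ?_⟩
  rw [A.hQQr z (hball hz), EReal.coe_le_coe_iff]
  exact (le_abs_self _).trans (hM z hz)

theorem reduced_partition_ratio_general (A : Standing) (β : ℕ → ℝ) (hβ : ∀ n, 0 < β n) :
    ∃ C h : ℝ, 0 < C ∧ 0 < h ∧ ∃ n₀ : ℕ, ∀ n : ℕ, n₀ ≤ n →
      (∫⁻ ζ, ENNReal.ofReal (boltzW A.Q (β n) (n - 1) n ζ) ∂(dAn (n - 1)))
        ≤ ENNReal.ofReal (C * Real.exp (β n * h * n)) * Zpart A.Q (β n) n := by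
  obtain ⟨z₀, r, M, hr, hM, hQM⟩ := A.exists_closedBall_Q_le
  refine ⟨(r ^ 2)⁻¹, M + 2 / r ^ 2, by positivity, by positivity, 1, fun n hn => ?_⟩
  obtain ⟨m, rfl⟩ := Nat.exists_eq_add_of_le' hn
  set c := r ^ 2 * exp (-(β (m + 1) * (M + 2 / r ^ 2) * (m + 1 : ℕ)))
  have hc : (r ^ 2)⁻¹ * exp (β (m + 1) * (M + 2 / r ^ 2) * (m + 1 : ℕ)) * c = 1 := by
    rw [mul_mul_mul_comm, inv_mul_cancel₀ (by positivity), ← exp_add, add_neg_cancel, exp_zero,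
      one_mul]
  calc ∫⁻ ξ, ENNReal.ofReal (boltzW A.Q (β (m + 1)) m (m + 1) ξ) ∂dAn m
      = ENNReal.ofReal ((r ^ 2)⁻¹ * exp (β (m + 1) * (M + 2 / r ^ 2) * (m + 1 : ℕ))) *
          (ENNReal.ofReal c *
            ∫⁻ ξ, ENNReal.ofReal (boltzW A.Q (β (m + 1)) m (m + 1) ξ) ∂dAn m) := by
        rw [← mul_assoc, ← ENNReal.ofReal_mul (by positivity), hc, ENNReal.ofReal_one, one_mul]
    _ ≤ _ := by
        gcongr
        exact mul_lintegral_boltzW_le_Zpart_succ A.lsc.measurable hr hM hQM (hβ _).le m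

/-- **Partition function ratio bound.** Under the standing assumptions on `Q`, if
`β_n·n/log n → ∞`, and `Z_{n,n-1}^β` denotes the partition function of `n-1` particles in the
external field `n·Q`, then there are `C, h > 0` and `n₀` with
`Z_{n,n-1}^{β_n} ≤ C e^{β_n h n} Z_n^{β_n}` for all `n ≥ n₀`. -/
theorem reduced_partition_ratio (A : Standing) (β : ℕ → ℝ) (hβ : ∀ n, 0 < β n)
    (hβn : Filter.Tendsto (fun n : ℕ => β n * n / Real.log n) Filter.atTop Filter.atTop) :
    ∃ C h : ℝ, 0 < C ∧ 0 < h ∧ ∃ n₀ : ℕ, ∀ n : ℕ, n₀ ≤ n →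
      (∫⁻ ζ, ENNReal.ofReal (boltzW A.Q (β n) (n - 1) n ζ) ∂(dAn (n - 1)))
        ≤ ENNReal.ofReal (C * Real.exp (β n * h * n)) * Zpart A.Q (β n) n :=
  reduced_partition_ratio_general A β hβ
end
end
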